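/- arXiv:1708.00915 — 3 statements merged into one kernel-verified Lean document; each statement's English description precedes it below -/
import Mathlib

section
/- Let n ≥ 2 and let {W(t)}_{t≥0} be a random sequence of column-stochastic n×n matrices, each of out-degree form, defined on a probability space. Suppose that almost surely {W(t)} has the directed infinite flow property and the associated sequence {ℓ_q} satisfies Σ_{q=1}^∞ 1/n^{ℓ_q} = ∞, and suppose there exists δ > 0 such that almost surely, for every t ≥ 0 there is t' ≥ t with y_i(t') ≥ δ for all i ∈ [n]. Then for the push-sum iterates, almost surely lim_{t→∞} |z_i(t+1) − x̄| = 0 for every i ∈ [n]. -/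
open Finset MeasureTheory

/-- `A_{S S̄} = ∑_{i ∈ S, j ∉ S} A i j`. -/
def flowSum {n : ℕ} (A : Matrix (Fin n) (Fin n) ℝ) (S : Finset (Fin n)) : ℝ :=
  ∑ i ∈ S, ∑ j ∈ Sᶜ, A i j

/-- `S` is a nontrivial subset of `[n]`. -/
def NontrivialSubset {n : ℕ} (S : Finset (Fin n)) : Prop :=
  S.Nonempty ∧ S ≠ Finset.univ

/-- Directed infinite flow property: for every nontrivial `S`, `∑_t A_{S S̄}(t) = ∞`. -/
def DirectedInfiniteFlow {n : ℕ} (A : ℕ → Matrix (Fin n) (Fin n) ℝ) : Prop :=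
  ∀ S : Finset (Fin n), NontrivialSubset S →
    Filter.Tendsto (fun T => ∑ t ∈ Finset.range T, flowSum (A t) S)
      Filter.atTop Filter.atTop

/-- The backward product `A(t:s) = A(t) A(t-1) ⋯ A(s)`. -/
def matProd {n : ℕ} (A : ℕ → Matrix (Fin n) (Fin n) ℝ) (t s : ℕ) :
    Matrix (Fin n) (Fin n) ℝ :=
  (((List.range (t + 1 - s)).map fun k => A (t - k))).prod

/-- Row-stochastic nonnegative matrix. -/
def RowStochastic {n : ℕ} (A : Matrix (Fin n) (Fin n) ℝ) : Prop :=
  (∀ i j, 0 ≤ A i j) ∧ ∀ i, ∑ j, A i j = 1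

/-- Column-stochastic nonnegative matrix. -/
def ColStochastic {n : ℕ} (A : Matrix (Fin n) (Fin n) ℝ) : Prop :=
  (∀ i j, 0 ≤ A i j) ∧ ∀ j, ∑ i, A i j = 1

/-- `W` is the degree-normalized adjacency matrix of a digraph with all self-loops:
`W i j = 1 / (out-degree of j)` if there is an edge from `j` to `i`, else `0`. -/
def OutDegreeForm {n : ℕ} (W : Matrix (Fin n) (Fin n) ℝ) : Prop :=
  ∃ N : Fin n → Finset (Fin n), (∀ j, j ∈ N j) ∧
    ∀ i j, W i j = if i ∈ N j then (1 : ℝ) / (N j).card else 0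

/-- Strong aperiodicity of a sequence of matrices. -/
def StronglyAperiodic {n : ℕ} (A : ℕ → Matrix (Fin n) (Fin n) ℝ) : Prop :=
  ∃ γ : ℝ, 0 < γ ∧ ∀ t i, γ ≤ A t i i

/-- The times `k_q`: `k_0 = 0` and `k_q` is the least `t' > k_{q-1}` with
nonzero flow `∑_{t=k_{q-1}}^{t'-1} A_{S S̄}(t) > 0` across every nontrivial cut. -/
noncomputable def kSeq {n : ℕ} (A : ℕ → Matrix (Fin n) (Fin n) ℝ) : ℕ → ℕ
  | 0 => 0
  | q + 1 => sInf {t' : ℕ | kSeq A q < t' ∧ ∀ S : Finset (Fin n), NontrivialSubset S →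
      0 < ∑ t ∈ Finset.Ico (kSeq A q) t', flowSum (A t) S}

/-- `ℓ_q = k_{qn} - k_{(q-1)n}`. -/
noncomputable def ellSeq {n : ℕ} (A : ℕ → Matrix (Fin n) (Fin n) ℝ) (q : ℕ) : ℕ :=
  kSeq A (q * n) - kSeq A ((q - 1) * n)

/-- The index set `Q_{t,s} = {q ≥ 1 : s ≤ k_{(q-1)n}, k_{qn} ≤ t}` (as a `Finset`). -/
noncomputable def QSet {n : ℕ} (A : ℕ → Matrix (Fin n) (Fin n) ℝ) (t s : ℕ) :
    Finset ℕ :=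
  (Finset.Icc 1 t).filter fun q => s ≤ kSeq A ((q - 1) * n) ∧ kSeq A (q * n) ≤ t

/-- `Λ_{t,s} = ∏_{q ∈ Q_{t,s}} (1 - 1/n^{ℓ_q})`. -/
noncomputable def Lam {n : ℕ} (A : ℕ → Matrix (Fin n) (Fin n) ℝ) (t s : ℕ) : ℝ :=
  ∏ q ∈ QSet A t s, (1 - 1 / (n : ℝ) ^ (ellSeq A q))

/-- Push-sum iterates: `u(0) = u0`, `u(t+1) = W(t) u(t)`. -/
def pushIter {n : ℕ} (W : ℕ → Matrix (Fin n) (Fin n) ℝ) (u0 : Fin n → ℝ) : ℕ → Fin n → ℝ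
  | 0 => u0
  | t + 1 => (W t).mulVec (pushIter W u0 t)

/-- A nonnegative matrix is irreducible if the digraph with an edge from `j` to `i`
whenever `A i j > 0` is strongly connected. -/
def IrreducibleMat {n : ℕ} (A : Matrix (Fin n) (Fin n) ℝ) : Prop :=
  ∀ i j : Fin n, Relation.ReflTransGen (fun a b => 0 < A b a) i j

/-!
The deviation `d(t) = x(t) - x̄ y(t)` is itself a push-sum trajectory, with zero sum. Every cut
receives flow in each window `[k_{q-1}, k_q)`, so during each window the positive support of every
column of the product gains a node; after the `n` windows ending at `k_{qn}` the block product is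
entrywise at least `n^{-ℓ_q}` and contracts zero-sum vectors in `ℓ¹` by `1 - n^{-ℓ_q}`. As
`∑ n^{-ℓ_q} = ∞`, `‖d(t)‖₁ → 0`. Nonnegative matrices preserve every band `|x - c y| ≤ r y`, so
once `‖d‖₁` is small at a time where `y ≥ δ`, the ratios `z_i` stay within `‖d‖₁ / δ` of `x̄`.
-/

open Filter Topology Matrix

section MatrixLemmas

variable {m ι : Type*} [Fintype ι]

lemma Matrix.mulVec_nonneg_of_nonneg {M : Matrix m ι ℝ} (hM : ∀ i j, 0 ≤ M i j) {u : ι → ℝ}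
    (hu : 0 ≤ u) : 0 ≤ M *ᵥ u :=
  fun i => Finset.sum_nonneg fun j _ => mul_nonneg (hM i j) (hu j)

lemma Matrix.mul_le_mulVec_apply {M : Matrix m ι ℝ} (hM : ∀ i j, 0 ≤ M i j) {u : ι → ℝ}
    (hu : 0 ≤ u) (i : m) (j : ι) : M i j * u j ≤ (M *ᵥ u) i :=
  Finset.single_le_sum (f := fun k => M i k * u k) (fun k _ => mul_nonneg (hM i k) (hu k))
    (Finset.mem_univ j)

lemma Matrix.sum_abs_mulVec_le [Fintype m] {B : Matrix m ι ℝ} {ε : ℝ}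
    (hB : ∀ i k, ε ≤ B i k) (hcol : ∀ k, ∑ i, B i k = 1) {u : ι → ℝ} (hu : ∑ k, u k = 0) :
    ∑ i, |(B *ᵥ u) i| ≤ (1 - Fintype.card m * ε) * ∑ k, |u k| := by
  have hshift : ∀ i, (B *ᵥ u) i = ∑ k, (B i k - ε) * u k := fun i => by
    simp only [sub_mul, Finset.sum_sub_distrib, ← Finset.mul_sum, hu, mul_zero, sub_zero]
    rfl
  calc ∑ i, |(B *ᵥ u) i| ≤ ∑ i, ∑ k, (B i k - ε) * |u k| := by
        refine Finset.sum_le_sum fun i _ => ?_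
        rw [hshift]
        refine (Finset.abs_sum_le_sum_abs _ _).trans_eq (Finset.sum_congr rfl fun k _ => ?_)
        rw [abs_mul, abs_of_nonneg (sub_nonneg.2 (hB i k))]
    _ = (1 - Fintype.card m * ε) * ∑ k, |u k| := by
        rw [Finset.sum_comm, Finset.mul_sum]
        refine Finset.sum_congr rfl fun k _ => ?_
        rw [← Finset.sum_mul, Finset.sum_sub_distrib, hcol k]
        simp

end MatrixLemmas

variable {n : ℕ}

namespace OutDegreeForm

variable {W : Matrix (Fin n) (Fin n) ℝ}

lemma mem_colStochastic (hW : OutDegreeForm W) : W ∈ colStochastic ℝ (Fin n) := by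
  obtain ⟨N, hself, hW⟩ := hW
  rw [mem_colStochastic_iff_sum]
  refine ⟨fun i j => by rw [hW]; split_ifs <;> positivity, fun j => ?_⟩
  have hcard : ((N j).card : ℝ) ≠ 0 := by exact_mod_cast (Finset.card_pos.2 ⟨j, hself j⟩).ne'
  simp only [hW, Finset.sum_ite_mem, Finset.univ_inter, Finset.sum_const, nsmul_eq_mul]
  field_simp

lemma diag_pos (hW : OutDegreeForm W) (j : Fin n) : 0 < W j j := by
  obtain ⟨N, hself, hW⟩ := hW
  have hcard : 0 < (N j).card := Finset.card_pos.2 ⟨j, hself j⟩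
  rw [hW, if_pos (hself j)]
  positivity

lemma one_div_le_of_pos (hW : OutDegreeForm W) {i j : Fin n} (hij : 0 < W i j) :
    1 / (n : ℝ) ≤ W i j := by
  obtain ⟨N, hself, hW⟩ := hW
  rw [hW] at hij ⊢
  split_ifs at hij ⊢ with hi
  · have hcard : 0 < (N j).card := Finset.card_pos.2 ⟨j, hself j⟩
    have hle : (N j).card ≤ n := by simpa using Finset.card_le_univ (N j)
    exact one_div_le_one_div_of_le (by exact_mod_cast hcard) (by exact_mod_cast hle)
  · exact absurd hij (lt_irrefl 0)

end OutDegreeForm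

section Trajectory

variable {A : ℕ → Matrix (Fin n) (Fin n) ℝ}

def IsTrajectoryFrom (A : ℕ → Matrix (Fin n) (Fin n) ℝ) (a : ℕ) (v : ℕ → Fin n → ℝ) : Prop :=
  ∀ t, a ≤ t → v (t + 1) = A t *ᵥ v t

lemma isTrajectoryFrom_pushIter (a : ℕ) (u : Fin n → ℝ) :
    IsTrajectoryFrom A a (pushIter A u) :=
  fun _ _ => rfl

lemma isTrajectoryFrom_pushIter_shift (a : ℕ) (u : Fin n → ℝ) :
    IsTrajectoryFrom A a fun t => pushIter (fun s => A (a + s)) u (t - a) := by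
  intro t ht
  show pushIter _ u (t + 1 - a) = _
  rw [show t + 1 - a = t - a + 1 by omega]
  simp only [pushIter, Nat.add_sub_cancel' ht]

namespace IsTrajectoryFrom

variable {a : ℕ} {v w : ℕ → Fin n → ℝ}

lemma mono (hv : IsTrajectoryFrom A a v) {b : ℕ} (hab : a ≤ b) : IsTrajectoryFrom A b v :=
  fun t ht => hv t (hab.trans ht)

lemma sub (hv : IsTrajectoryFrom A a v) (hw : IsTrajectoryFrom A a w) :
    IsTrajectoryFrom A a (v - w) := fun t ht => by
  simp only [Pi.sub_apply, hv t ht, hw t ht, mulVec_sub]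

lemma const_smul (hv : IsTrajectoryFrom A a v) (c : ℝ) : IsTrajectoryFrom A a (c • v) :=
  fun t ht => by simp only [Pi.smul_apply, hv t ht, mulVec_smul]

lemma induction (hv : IsTrajectoryFrom A a v) {P : (Fin n → ℝ) → Prop} (h0 : P (v a))
    (hstep : ∀ t, a ≤ t → P (v t) → P (A t *ᵥ v t)) {t : ℕ} (ht : a ≤ t) : P (v t) := by
  induction t, ht using Nat.le_induction with
  | base => exact h0
  | succ t ht ih => rw [hv t ht]; exact hstep t ht ih

lemma nonneg (hv : IsTrajectoryFrom A a v) (hnn : ∀ t i j, 0 ≤ A t i j) (h0 : 0 ≤ v a)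
    {t : ℕ} (ht : a ≤ t) : 0 ≤ v t :=
  hv.induction h0 (fun t _ h => mulVec_nonneg_of_nonneg (hnn t) h) ht

lemma sum_eq (hv : IsTrajectoryFrom A a v) (hA : ∀ t, A t ∈ colStochastic ℝ (Fin n))
    {t : ℕ} (ht : a ≤ t) : ∑ i, v t i = ∑ i, v a i :=
  hv.induction (P := fun u => ∑ i, u i = ∑ i, v a i) rfl
    (fun t _ h => (sum_mulVec_of_mem_colStochastic (hA t)).trans h) ht

lemma sum_abs_succ_le (hv : IsTrajectoryFrom A a v) (hA : ∀ t, A t ∈ colStochastic ℝ (Fin n))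
    (h0 : ∑ i, v a i = 0) {t : ℕ} (ht : a ≤ t) : ∑ i, |v (t + 1) i| ≤ ∑ i, |v t i| := by
  have := sum_abs_mulVec_le (fun i k => nonneg_of_mem_colStochastic (hA t) (i := i) (j := k))
    (sum_col_of_mem_colStochastic (hA t)) ((hv.sum_eq hA ht).trans h0)
  rw [hv t ht]
  simpa using this

lemma eq_mulVec (hv : IsTrajectoryFrom A a v) {w : Fin n → ℕ → Fin n → ℝ}
    (hw : ∀ k, IsTrajectoryFrom A a (w k)) (hw0 : ∀ k, w k a = Pi.single k 1)
    {t : ℕ} (ht : a ≤ t) : v t = Matrix.of (fun i k => w k t i) *ᵥ v a := by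
  induction t, ht using Nat.le_induction with
  | base =>
      ext i
      simp [mulVec, dotProduct, hw0, Pi.single_apply]
  | succ t ht ih =>
      rw [hv t ht, ih, mulVec_mulVec]
      congr 1
      ext i k
      simp [hw k t ht, mul_apply, mulVec, dotProduct]

lemma pos_succ (hv : IsTrajectoryFrom A a v) (hnn : ∀ t i j, 0 ≤ A t i j) (h0 : 0 ≤ v a)
    {t : ℕ} (ht : a ≤ t) {i j : Fin n} (hij : 0 < A t i j) (hj : 0 < v t j) :
    0 < v (t + 1) i := by
  rw [hv t ht]
  exact (mul_pos hij hj).trans_le (mul_le_mulVec_apply (hnn t) (hv.nonneg hnn h0 ht) i j)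

lemma pos_of_le (hv : IsTrajectoryFrom A a v) (hnn : ∀ t i j, 0 ≤ A t i j)
    (hdiag : ∀ t i, 0 < A t i i) (h0 : 0 ≤ v a) {s t : ℕ} (has : a ≤ s) (hst : s ≤ t)
    {i : Fin n} (hs : 0 < v s i) : 0 < v t i := by
  induction t, hst using Nat.le_induction with
  | base => exact hs
  | succ t hst ih => exact hv.pos_succ hnn h0 (has.trans hst) (hdiag t i) ih

lemma pow_le_of_pos (hv : IsTrajectoryFrom A a v) (hnn : ∀ t i j, 0 ≤ A t i j) {ε : ℝ}
    (hε : 0 ≤ ε) (hlow : ∀ t i j, 0 < A t i j → ε ≤ A t i j) (h0 : 0 ≤ v a)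
    (h1 : ∀ i, 0 < v a i → 1 ≤ v a i) {t : ℕ} (ht : a ≤ t) {i : Fin n} (hi : 0 < v t i) :
    ε ^ (t - a) ≤ v t i := by
  induction t, ht using Nat.le_induction generalizing i with
  | base => simpa using h1 i hi
  | succ t ht ih =>
      have hvt := hv.nonneg hnn h0 ht
      rw [hv t ht] at hi ⊢
      obtain ⟨j, -, hj⟩ := Finset.exists_lt_of_sum_lt (s := Finset.univ)
        (f := fun _ => (0 : ℝ)) (g := fun j => A t i j * v t j)
        (by simpa [mulVec, dotProduct] using hi)
      have hAij : 0 < A t i j := pos_of_mul_pos_left hj (hvt j)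
      have hvj : 0 < v t j := pos_of_mul_pos_right hj (hnn t i j)
      calc ε ^ (t + 1 - a) = ε * ε ^ (t - a) := by rw [show t + 1 - a = t - a + 1 by omega]; ring
        _ ≤ A t i j * v t j := mul_le_mul (hlow t i j hAij) (ih hvj) (by positivity) hAij.le
        _ ≤ (A t *ᵥ v t) i := mul_le_mulVec_apply (hnn t) hvt i j

end IsTrajectoryFrom

end Trajectory

lemma Finset.eq_univ_of_ssubset_succ {α : Type*} [Fintype α] {s : ℕ → Finset α}
    (hs : Monotone s) (hgrow : ∀ r, s r ≠ Finset.univ → s r ⊂ s (r + 1)) :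
    s (Fintype.card α) = Finset.univ := by
  have hcard : ∀ r, min (Fintype.card α) r ≤ (s r).card := by
    intro r
    induction r with
    | zero => simp
    | succ r ih =>
        by_cases hr : s r = Finset.univ
        · have : s (r + 1) = Finset.univ :=
            Finset.univ_subset_iff.1 (hr ▸ hs (Nat.le_succ r))
          simp [this]
        · have := Finset.card_lt_card (hgrow r hr)
          omega
  exact Finset.eq_univ_of_card _
    (le_antisymm (Finset.card_le_univ _) ((min_self _).symm.trans_le (hcard _)))

lemma exists_pos_of_flowSum_pos {M : Matrix (Fin n) (Fin n) ℝ} {S : Finset (Fin n)}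
    (h : 0 < flowSum M S) : ∃ i ∈ S, ∃ j ∉ S, 0 < M i j := by
  obtain ⟨i, hi, hpos⟩ := Finset.exists_lt_of_sum_lt (f := fun _ => (0 : ℝ))
    (by simpa [flowSum] using h)
  obtain ⟨j, hj, hij⟩ := Finset.exists_lt_of_sum_lt (f := fun _ => (0 : ℝ)) (by simpa using hpos)
  exact ⟨i, hi, j, Finset.mem_compl.1 hj, hij⟩

section Support

variable {A : ℕ → Matrix (Fin n) (Fin n) ℝ} {a : ℕ} {v : ℕ → Fin n → ℝ}

noncomputable def posSupport (u : Fin n → ℝ) : Finset (Fin n) :=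
  Finset.univ.filter fun i => 0 < u i

lemma mem_posSupport {u : Fin n → ℝ} {i : Fin n} : i ∈ posSupport u ↔ 0 < u i := by
  simp [posSupport]

lemma IsTrajectoryFrom.posSupport_mono (hv : IsTrajectoryFrom A a v)
    (hnn : ∀ t i j, 0 ≤ A t i j) (hdiag : ∀ t i, 0 < A t i i) (h0 : 0 ≤ v a) {s t : ℕ}
    (has : a ≤ s) (hst : s ≤ t) : posSupport (v s) ⊆ posSupport (v t) := fun _ hi =>
  mem_posSupport.2 (hv.pos_of_le hnn hdiag h0 has hst (mem_posSupport.1 hi))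

lemma IsTrajectoryFrom.posSupport_ssubset (hv : IsTrajectoryFrom A a v)
    (hnn : ∀ t i j, 0 ≤ A t i j) (hdiag : ∀ t i, 0 < A t i i) (h0 : 0 ≤ v a) {b c : ℕ}
    (hab : a ≤ b) (hbc : b ≤ c)
    (hflow : ∀ S, NontrivialSubset S → 0 < ∑ t ∈ Finset.Ico b c, flowSum (A t) S)
    (hne : (posSupport (v b)).Nonempty) (huniv : posSupport (v b) ≠ Finset.univ) :
    posSupport (v b) ⊂ posSupport (v c) := by
  set S := posSupport (v b)
  have hcut : NontrivialSubset Sᶜ :=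
    ⟨(Finset.compl_ne_univ_iff_nonempty Sᶜ).1 (by rwa [compl_compl]),
      (Finset.compl_ne_univ_iff_nonempty S).2 hne⟩
  obtain ⟨t, ht, hflow_t⟩ := Finset.exists_lt_of_sum_lt (f := fun _ => (0 : ℝ))
    (by simpa using hflow _ hcut)
  obtain ⟨i, hi, j, hj, hij⟩ := exists_pos_of_flowSum_pos hflow_t
  rw [Finset.mem_Ico] at ht
  rw [Finset.notMem_compl] at hj
  have hj_pos : 0 < v t j := hv.pos_of_le hnn hdiag h0 hab ht.1 (mem_posSupport.1 hj)
  have hi_pos : 0 < v c i := hv.pos_of_le hnn hdiag h0 (Nat.le_succ_of_le (hab.trans ht.1))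
    (Nat.succ_le_of_lt ht.2) (hv.pos_succ hnn h0 (hab.trans ht.1) hij hj_pos)
  exact (Finset.ssubset_iff_of_subset (hv.posSupport_mono hnn hdiag h0 hab hbc)).2
    ⟨i, mem_posSupport.2 hi_pos, Finset.mem_compl.1 hi⟩

lemma IsTrajectoryFrom.posSupport_eq_univ (hv : IsTrajectoryFrom A a v)
    (hnn : ∀ t i j, 0 ≤ A t i j) (hdiag : ∀ t i, 0 < A t i i) (h0 : 0 ≤ v a)
    (hne : (posSupport (v a)).Nonempty) {b : ℕ → ℕ} (hb : Monotone b) (hab : a ≤ b 0)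
    (hflow : ∀ r S, NontrivialSubset S →
      0 < ∑ t ∈ Finset.Ico (b r) (b (r + 1)), flowSum (A t) S) :
    posSupport (v (b n)) = Finset.univ := by
  have hmono : Monotone fun r => posSupport (v (b r)) := fun r r' hrr' =>
    hv.posSupport_mono hnn hdiag h0 (hab.trans (hb (Nat.zero_le r))) (hb hrr')
  have := Finset.eq_univ_of_ssubset_succ hmono fun r huniv =>
    hv.posSupport_ssubset hnn hdiag h0 (hab.trans (hb (Nat.zero_le r))) (hb r.le_succ)
      (hflow r) ((hne.mono (hv.posSupport_mono hnn hdiag h0 le_rfl hab)).mono (hmono r.zero_le))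
      huniv
  simpa using this

end Support

section Windows

variable {A : ℕ → Matrix (Fin n) (Fin n) ℝ}

lemma kSeq_succ_spec (hflow : DirectedInfiniteFlow A) (q : ℕ) :
    kSeq A q < kSeq A (q + 1) ∧ ∀ S : Finset (Fin n), NontrivialSubset S →
      0 < ∑ t ∈ Finset.Ico (kSeq A q) (kSeq A (q + 1)), flowSum (A t) S := by
  have hev : ∀ᶠ T in atTop, kSeq A q < T ∧ ∀ S : Finset (Fin n), NontrivialSubset S →
      0 < ∑ t ∈ Finset.Ico (kSeq A q) T, flowSum (A t) S := by
    refine (eventually_gt_atTop _).and (eventually_all.2 fun S => ?_)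
    by_cases hS : NontrivialSubset S
    · filter_upwards [eventually_ge_atTop (kSeq A q),
        (hflow S hS).eventually_gt_atTop (∑ t ∈ Finset.range (kSeq A q), flowSum (A t) S)]
        with T hT hlarge _
      rw [Finset.sum_Ico_eq_sub _ hT]
      linarith
    · exact Eventually.of_forall fun _ h => absurd h hS
  exact Nat.sInf_mem hev.exists

lemma kSeq_strictMono (hflow : DirectedInfiniteFlow A) : StrictMono (kSeq A) :=
  strictMono_nat_of_lt_succ fun q => (kSeq_succ_spec hflow q).1

end Windows

section Contraction

variable {A : ℕ → Matrix (Fin n) (Fin n) ℝ} {v : ℕ → Fin n → ℝ} {ε : ℝ}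

lemma IsTrajectoryFrom.sum_abs_kSeq_add_le [NeZero n] (hv : IsTrajectoryFrom A 0 v)
    (hv0 : ∑ i, v 0 i = 0) (hA : ∀ t, A t ∈ colStochastic ℝ (Fin n))
    (hdiag : ∀ t i, 0 < A t i i) (hε : 0 ≤ ε) (hlow : ∀ t i j, 0 < A t i j → ε ≤ A t i j)
    (hflow : DirectedInfiniteFlow A) (q : ℕ) :
    ∑ i, |v (kSeq A (q + n)) i| ≤
      (1 - ε ^ (kSeq A (q + n) - kSeq A q)) * ∑ i, |v (kSeq A q) i| := by
  have hnn : ∀ t i j, 0 ≤ A t i j := fun t _ _ => nonneg_of_mem_colStochastic (hA t)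
  set a := kSeq A q
  set c := kSeq A (q + n)
  have hac : a ≤ c := (kSeq_strictMono hflow).monotone (Nat.le_add_right q n)
  set w : Fin n → ℕ → Fin n → ℝ := fun k t => pushIter (fun s => A (a + s)) (Pi.single k 1) (t - a)
  have hw : ∀ k, IsTrajectoryFrom A a (w k) := fun k => isTrajectoryFrom_pushIter_shift a _
  have hw0 : ∀ k, w k a = Pi.single k 1 := fun k => by simp [w, pushIter]
  have hw0_nonneg : ∀ k, 0 ≤ w k a := fun k i => by
    rw [hw0]; by_cases h : i = k <;> simp [h]
  have hfull : ∀ k, posSupport (w k c) = Finset.univ := fun k =>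
    (hw k).posSupport_eq_univ (b := fun r => kSeq A (q + r)) hnn hdiag (hw0_nonneg k)
      ⟨k, by simp [mem_posSupport, hw0]⟩ ((kSeq_strictMono hflow).monotone.comp
        fun _ _ h => Nat.add_le_add_left h q) le_rfl fun r => (kSeq_succ_spec hflow (q + r)).2
  have hentry : ∀ i k, ε ^ (c - a) ≤ w k c i := fun i k =>
    (hw k).pow_le_of_pos hnn hε hlow (hw0_nonneg k)
      (fun i hi => by rw [hw0] at hi ⊢; by_cases h : i = k <;> simp_all) hac
      (mem_posSupport.1 (hfull k ▸ Finset.mem_univ i))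
  have hcol : ∀ k, ∑ i, w k c i = 1 := fun k => by simp [(hw k).sum_eq hA hac, hw0]
  have hva : ∑ i, v a i = 0 := (hv.sum_eq hA (Nat.zero_le a)).trans hv0
  rw [(hv.mono (Nat.zero_le a)).eq_mulVec hw hw0 hac]
  refine (sum_abs_mulVec_le (B := Matrix.of fun i k => w k c i) hentry hcol hva).trans ?_
  have hn : (1 : ℝ) ≤ n := by exact_mod_cast Nat.one_le_iff_ne_zero.2 (NeZero.ne n)
  have hpow : 0 ≤ ε ^ (c - a) := pow_nonneg hε _
  refine mul_le_mul_of_nonneg_right ?_ (Finset.sum_nonneg fun _ _ => abs_nonneg _)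
  simp only [Fintype.card_fin]
  nlinarith

lemma IsTrajectoryFrom.sum_abs_kSeq_mul_le [NeZero n] (hv : IsTrajectoryFrom A 0 v)
    (hv0 : ∑ i, v 0 i = 0) (hA : ∀ t, A t ∈ colStochastic ℝ (Fin n))
    (hdiag : ∀ t i, 0 < A t i i) (hε : 0 ≤ ε) (hlow : ∀ t i j, 0 < A t i j → ε ≤ A t i j)
    (hflow : DirectedInfiniteFlow A) (Q : ℕ) :
    ∑ i, |v (kSeq A (Q * n)) i| ≤
      Real.exp (-∑ q ∈ Finset.Icc 1 Q, ε ^ ellSeq A q) * ∑ i, |v 0 i| := by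
  induction Q with
  | zero => simp [kSeq]
  | succ Q ih =>
      have hblock := hv.sum_abs_kSeq_add_le hv0 hA hdiag hε hlow hflow (Q * n)
      rw [← Nat.succ_mul] at hblock
      set x := ε ^ ellSeq A (Q + 1)
      have hx : 1 - x ≤ Real.exp (-x) := by linarith [Real.add_one_le_exp (-x)]
      calc ∑ i, |v (kSeq A ((Q + 1) * n)) i|
          ≤ (1 - x) * ∑ i, |v (kSeq A (Q * n)) i| := hblock
        _ ≤ Real.exp (-x) * ∑ i, |v (kSeq A (Q * n)) i| :=
            mul_le_mul_of_nonneg_right hx (Finset.sum_nonneg fun _ _ => abs_nonneg _)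
        _ ≤ Real.exp (-x) * (Real.exp (-∑ q ∈ Finset.Icc 1 Q, ε ^ ellSeq A q) * ∑ i, |v 0 i|) :=
            mul_le_mul_of_nonneg_left ih (Real.exp_pos _).le
        _ = Real.exp (-∑ q ∈ Finset.Icc 1 (Q + 1), ε ^ ellSeq A q) * ∑ i, |v 0 i| := by
            rw [Finset.sum_Icc_succ_top (by omega), ← mul_assoc, ← Real.exp_add, neg_add,
              add_comm]

lemma IsTrajectoryFrom.tendsto_sum_abs [NeZero n] (hv : IsTrajectoryFrom A 0 v)
    (hv0 : ∑ i, v 0 i = 0) (hA : ∀ t, A t ∈ colStochastic ℝ (Fin n))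
    (hdiag : ∀ t i, 0 < A t i i) (hε : 0 ≤ ε) (hlow : ∀ t i j, 0 < A t i j → ε ≤ A t i j)
    (hflow : DirectedInfiniteFlow A)
    (hsum : Tendsto (fun Q => ∑ q ∈ Finset.Icc 1 Q, ε ^ ellSeq A q) atTop atTop) :
    Tendsto (fun t => ∑ i, |v t i|) atTop (𝓝 0) := by
  set f := fun t => ∑ i, |v t i|
  have hf_anti : Antitone f :=
    antitone_nat_of_succ_le fun t => hv.sum_abs_succ_le hA hv0 (Nat.zero_le t)
  have hf_nonneg : ∀ t, 0 ≤ f t := fun t => Finset.sum_nonneg fun _ _ => abs_nonneg _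
  have hf_lim := tendsto_atTop_ciInf hf_anti ⟨0, Set.forall_mem_range.2 hf_nonneg⟩
  have hsub : Tendsto (fun Q => kSeq A (Q * n)) atTop atTop :=
    ((kSeq_strictMono hflow).comp
      (strictMono_mul_right_of_pos (Nat.pos_of_ne_zero (NeZero.ne n)))).tendsto_atTop
  have hsub_lim : Tendsto (fun Q => f (kSeq A (Q * n))) atTop (𝓝 0) := by
    have hbound := (Real.tendsto_exp_atBot.comp (tendsto_neg_atTop_atBot.comp hsum)).mul_const
      (∑ i, |v 0 i|)
    rw [zero_mul] at hbound
    exact tendsto_of_tendsto_of_tendsto_of_le_of_le tendsto_const_nhds hbound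
      (fun Q => hf_nonneg _) fun Q => hv.sum_abs_kSeq_mul_le hv0 hA hdiag hε hlow hflow Q
  rwa [tendsto_nhds_unique (hf_lim.comp hsub) hsub_lim] at hf_lim

end Contraction

section Ratio

variable {A : ℕ → Matrix (Fin n) (Fin n) ℝ} {s : ℕ} {x y : ℕ → Fin n → ℝ}

lemma IsTrajectoryFrom.abs_sub_mul_le (hx : IsTrajectoryFrom A s x)
    (hy : IsTrajectoryFrom A s y) (hnn : ∀ t i j, 0 ≤ A t i j) {c r : ℝ}
    (hband : ∀ k, |x s k - c * y s k| ≤ r * y s k) {t : ℕ} (ht : s ≤ t) (k : Fin n) :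
    |x t k - c * y t k| ≤ r * y t k := by
  have hlower := (hx.sub (hy.const_smul (c - r))).nonneg hnn
    (fun k => by simp only [Pi.sub_apply, Pi.smul_apply, smul_eq_mul, Pi.zero_apply]
                 linarith [(abs_le.1 (hband k)).1]) ht k
  have hupper := ((hy.const_smul (c + r)).sub hx).nonneg hnn
    (fun k => by simp only [Pi.sub_apply, Pi.smul_apply, smul_eq_mul, Pi.zero_apply]
                 linarith [(abs_le.1 (hband k)).2]) ht k
  simp only [Pi.sub_apply, Pi.smul_apply, smul_eq_mul, Pi.zero_apply] at hlower hupper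
  exact abs_le.2 ⟨by linarith, by linarith⟩

lemma tendsto_sum_abs_pushIter_sub_mul [NeZero n] (hA : ∀ t, OutDegreeForm (A t))
    (hflow : DirectedInfiniteFlow A)
    (hsum : Tendsto (fun Q => ∑ q ∈ Finset.Icc 1 Q, 1 / (n : ℝ) ^ ellSeq A q) atTop atTop)
    (x0 : Fin n → ℝ) :
    Tendsto (fun t => ∑ k, |pushIter A x0 t k - (∑ j, x0 j) / n * pushIter A (fun _ => 1) t k|)
      atTop (𝓝 0) := by
  have hd := (isTrajectoryFrom_pushIter 0 x0).sub
    ((isTrajectoryFrom_pushIter (A := A) 0 fun _ => 1).const_smul ((∑ j, x0 j) / n))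
  have hd0 : ∑ k, (x0 k - (∑ j, x0 j) / n * 1) = 0 := by
    rw [Finset.sum_sub_distrib, ← Finset.mul_sum]
    simp
  exact hd.tendsto_sum_abs hd0 (fun t => (hA t).mem_colStochastic) (fun t => (hA t).diag_pos)
    (by positivity) (fun t _ _ hij => (hA t).one_div_le_of_pos hij) hflow
    (by simpa only [_root_.one_div_pow] using hsum)

theorem tendsto_pushIter_div (hA : ∀ t, OutDegreeForm (A t)) (hflow : DirectedInfiniteFlow A)
    (hsum : Tendsto (fun Q => ∑ q ∈ Finset.Icc 1 Q, 1 / (n : ℝ) ^ ellSeq A q) atTop atTop)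
    {δ : ℝ} (hδ : 0 < δ)
    (hy : ∀ t : ℕ, ∃ t', t ≤ t' ∧ ∀ i, δ ≤ pushIter A (fun _ => 1) t' i)
    (x0 : Fin n → ℝ) (i : Fin n) :
    Tendsto (fun t => pushIter A x0 t i / pushIter A (fun _ => 1) t i) atTop
      (𝓝 ((∑ j, x0 j) / n)) := by
  have : NeZero n := NeZero.of_pos i.pos
  have hnn : ∀ t i j, 0 ≤ A t i j := fun t _ _ =>
    nonneg_of_mem_colStochastic (hA t).mem_colStochastic
  set x := pushIter A x0
  set y := pushIter A fun _ => 1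
  set xbar := (∑ j, x0 j) / n
  have hy_pos : ∀ t k, 0 < y t k := fun t k =>
    (isTrajectoryFrom_pushIter 0 _).pos_of_le hnn (fun t => (hA t).diag_pos)
      (fun _ => zero_le_one) le_rfl (Nat.zero_le t) one_pos
  rw [Metric.tendsto_atTop]
  intro ε hε
  obtain ⟨T, hT⟩ := eventually_atTop.1 <|
    (tendsto_sum_abs_pushIter_sub_mul hA hflow hsum x0).eventually
      (gt_mem_nhds (by positivity : 0 < δ * ε / 2))
  obtain ⟨t', hTt', hyt'⟩ := hy T
  have hband : ∀ k, |x t' k - xbar * y t' k| ≤ ε / 2 * y t' k := fun k =>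
    calc |x t' k - xbar * y t' k| ≤ ∑ l, |x t' l - xbar * y t' l| :=
          Finset.single_le_sum (f := fun l => |x t' l - xbar * y t' l|)
            (fun _ _ => abs_nonneg _) (Finset.mem_univ k)
      _ ≤ δ * ε / 2 := (hT t' hTt').le
      _ ≤ ε / 2 * y t' k := by nlinarith [hyt' k]
  refine ⟨t', fun t ht => ?_⟩
  have hyt := hy_pos t i
  have hbt := (isTrajectoryFrom_pushIter t' x0).abs_sub_mul_le (isTrajectoryFrom_pushIter t' _)
    hnn hband ht i
  rw [Real.dist_eq, show x t i / y t i - xbar = (x t i - xbar * y t i) / y t i by field_simp,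
    abs_div, abs_of_pos hyt, div_lt_iff₀ hyt]
  linarith [mul_pos hε hyt]

end Ratio

theorem pushsum_converges_as_general {n : ℕ}
    {Ω : Type*} [MeasurableSpace Ω] (μ : MeasureTheory.Measure Ω)
    (W : ℕ → Ω → Matrix (Fin n) (Fin n) ℝ)
    (hOD : ∀ t ω, OutDegreeForm (W t ω))
    (hflow : ∀ᵐ ω ∂μ, DirectedInfiniteFlow (fun t => W t ω))
    (hsum : ∀ᵐ ω ∂μ, Filter.Tendsto
      (fun Q => ∑ q ∈ Finset.Icc 1 Q, 1 / (n : ℝ) ^ (ellSeq (fun t => W t ω) q))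
      Filter.atTop Filter.atTop)
    (δ : ℝ) (hδ : 0 < δ)
    (hy : ∀ᵐ ω ∂μ, ∀ t : ℕ, ∃ t', t ≤ t' ∧
      ∀ i, δ ≤ pushIter (fun s => W s ω) (fun _ => 1) t' i)
    (x0 : Fin n → ℝ) :
    ∀ᵐ ω ∂μ, ∀ i : Fin n, Filter.Tendsto
      (fun t => |pushIter (fun s => W s ω) x0 (t + 1) i
          / pushIter (fun s => W s ω) (fun _ => 1) (t + 1) i - (∑ j, x0 j) / n|)
      Filter.atTop (nhds 0) := by
  filter_upwards [hflow, hsum, hy] with ω hflow_ω hsum_ω hy_ω i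
  have hz := (tendsto_pushIter_div (fun t => hOD t ω) hflow_ω hsum_ω hδ hy_ω x0 i).comp
    (tendsto_add_atTop_nat 1)
  have := (hz.sub_const ((∑ j, x0 j) / n)).abs
  rwa [sub_self, abs_zero] at this

/-- Almost sure convergence of push-sum: if a.s. the random sequence has
the directed infinite flow property and `∑_q 1/n^{ℓ_q} = ∞`, and a.s. the `y`-iterates
return above some fixed `δ > 0` infinitely often, then a.s. `z_i(t+1) → x̄`. -/
theorem pushsum_converges_as {n : ℕ} (hn : 2 ≤ n)
    {Ω : Type*} [MeasurableSpace Ω] (μ : MeasureTheory.Measure Ω)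
    [MeasureTheory.IsProbabilityMeasure μ]
    (W : ℕ → Ω → Matrix (Fin n) (Fin n) ℝ)
    (hmeas : ∀ t i j, Measurable fun ω => W t ω i j)
    (hCS : ∀ t ω, ColStochastic (W t ω))
    (hOD : ∀ t ω, OutDegreeForm (W t ω))
    (hflow : ∀ᵐ ω ∂μ, DirectedInfiniteFlow (fun t => W t ω))
    (hsum : ∀ᵐ ω ∂μ, Filter.Tendsto
      (fun Q => ∑ q ∈ Finset.Icc 1 Q, 1 / (n : ℝ) ^ (ellSeq (fun t => W t ω) q))
      Filter.atTop Filter.atTop)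
    (δ : ℝ) (hδ : 0 < δ)
    (hy : ∀ᵐ ω ∂μ, ∀ t : ℕ, ∃ t', t ≤ t' ∧
      ∀ i, δ ≤ pushIter (fun s => W s ω) (fun _ => 1) t' i)
    (x0 : Fin n → ℝ) :
    ∀ᵐ ω ∂μ, ∀ i : Fin n, Filter.Tendsto
      (fun t => |pushIter (fun s => W s ω) x0 (t + 1) i
          / pushIter (fun s => W s ω) (fun _ => 1) (t + 1) i - (∑ j, x0 j) / n|)
      Filter.atTop (nhds 0) :=
  pushsum_converges_as_general μ W hOD hflow hsum δ hδ hy x0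
end

section
/- In the random model with B-irreducible probability matrices, the random sequence {W(t)} has the directed infinite flow property almost surely. -/
open Finset MeasureTheory

/-- The random column-stochastic matrix built from the Bernoulli variables `R`:
`W(t)(ω)_{ij} = R_{ij}(t)(ω) / ∑_k R_{kj}(t)(ω)`. -/
noncomputable def Wof {n : ℕ} {Ω : Type*} (R : ℕ → Fin n → Fin n → Ω → ℝ)
    (t : ℕ) (ω : Ω) : Matrix (Fin n) (Fin n) ℝ :=
  fun i j => R t i j ω / ∑ k, R t k j ω

/-!
For a cut `S`, irreducibility of the `m`-th block sum `∑_{t ∈ [mB, (m+1)B)} P(t)` yields a time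
`τ_m` in that block and `i_m ∈ S`, `j_m ∉ S` with `P_{i_m j_m}(τ_m) ≥ ε`. The events
`R_{i_m j_m}(τ_m) = 1` are independent (the `τ_m` are distinct) and each has probability at
least `ε`, so by the second Borel–Cantelli lemma almost surely infinitely many of them occur.
On each of them `W_{i_m j_m}(τ_m)` is the reciprocal of a column count of `R`, hence at least
`1/n`, and so `W_{S S̄}(τ_m) ≥ 1/n` infinitely often.
-/

open Filter ProbabilityTheory

lemma Relation.ReflTransGen.exists_boundary_step {α : Type*} {r : α → α → Prop} {p : α → Prop}
    {a b : α} (h : Relation.ReflTransGen r a b) (ha : ¬ p a) (hb : p b) :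
    ∃ x y, ¬ p x ∧ p y ∧ r x y := by
  induction h with
  | refl => exact absurd hb ha
  | @tail c d _ hcd ih =>
    by_cases hc : p c
    · exact ih hc
    · exact ⟨c, d, hc, hb, hcd⟩

lemma IrreducibleMat.exists_pos_of_nontrivialSubset {n : ℕ} {A : Matrix (Fin n) (Fin n) ℝ}
    (hA : IrreducibleMat A) {S : Finset (Fin n)} (hS : NontrivialSubset S) :
    ∃ i ∈ S, ∃ j ∉ S, 0 < A i j := by
  obtain ⟨i, hi⟩ := hS.1
  obtain ⟨j, -, hj⟩ := Finset.exists_of_ssubset (ssubset_univ_iff.2 hS.2)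
  obtain ⟨x, y, hx, hy, hxy⟩ := (hA j i).exists_boundary_step (p := (· ∈ S)) hj hi
  exact ⟨y, hy, x, hx, hxy⟩

lemma IrreducibleMat.exists_pos_of_sum {n : ℕ} {ι : Type*} {s : Finset ι}
    {P : ι → Matrix (Fin n) (Fin n) ℝ} (hP : IrreducibleMat (∑ t ∈ s, P t))
    {S : Finset (Fin n)} (hS : NontrivialSubset S) :
    ∃ t ∈ s, ∃ i ∈ S, ∃ j ∉ S, 0 < P t i j := by
  obtain ⟨i, hi, j, hj, hpos⟩ := hP.exists_pos_of_nontrivialSubset hS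
  rw [Matrix.sum_apply, ← Finset.sum_const_zero] at hpos
  obtain ⟨t, ht, htpos⟩ := Finset.exists_lt_of_sum_lt hpos
  exact ⟨t, ht, i, hi, j, hj, htpos⟩

lemma ProbabilityTheory.iIndepFun.iIndepSet_preimage {Ω ι β : Type*} [MeasurableSpace Ω]
    {μ : Measure Ω} [mβ : MeasurableSpace β] {f : ι → Ω → β} (hf : iIndepFun f μ)
    {T : ι → Set β} (hT : ∀ i, MeasurableSet (T i)) :
    iIndepSet (fun i => f i ⁻¹' T i) μ :=
  (iIndepSet_iff_iIndep _ _).2 <| iIndep_of_iIndep_of_le hf.iIndep fun i =>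
    MeasurableSpace.generateFrom_le <| by
      rintro _ rfl
      exact ⟨T i, hT i, rfl⟩

lemma ae_frequently_mem_of_iIndepSet {Ω : Type*} [MeasurableSpace Ω] {μ : Measure Ω}
    {E : ℕ → Set Ω} (hE : ∀ m, MeasurableSet (E m)) (hind : iIndepSet E μ)
    {c : ENNReal} (hc : c ≠ 0) (hcE : ∀ m, c ≤ μ (E m)) :
    ∀ᵐ ω ∂μ, ∃ᶠ m in atTop, ω ∈ E m := by
  have := hind.isProbabilityMeasure
  have hsum : ∑' m, μ (E m) = ⊤ :=
    eq_top_iff.2 <| (ENNReal.tsum_const_eq_top_of_ne_zero hc).ge.trans (ENNReal.tsum_le_tsum hcE)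
  have hlimsup := measure_limsup_eq_one hE hind hsum
  simp_rw [← mem_limsup_iff_frequently_mem]
  rw [ae_mem_iff_measure_eq (MeasurableSet.measurableSet_limsup hE).nullMeasurableSet,
    hlimsup, measure_univ]

lemma tendsto_sum_range_atTop_of_frequently_le {f : ℕ → ℝ} (hf : ∀ t, 0 ≤ f t) {c : ℝ}
    (hc : 0 < c) (h : ∃ᶠ t in atTop, c ≤ f t) :
    Tendsto (fun T => ∑ t ∈ range T, f t) atTop atTop := by
  refine (not_summable_iff_tendsto_nat_atTop_of_nonneg hf).1 fun hsum => ?_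
  obtain ⟨t, hle, hlt⟩ := (h.and_eventually (hsum.tendsto_atTop_zero.eventually_lt_const hc)).exists
  exact hle.not_gt hlt

lemma flowSum_nonneg {n : ℕ} {A : Matrix (Fin n) (Fin n) ℝ} (hA : ∀ i j, 0 ≤ A i j)
    (S : Finset (Fin n)) : 0 ≤ flowSum A S :=
  sum_nonneg fun i _ => sum_nonneg fun j _ => hA i j

lemma le_flowSum {n : ℕ} {A : Matrix (Fin n) (Fin n) ℝ} (hA : ∀ i j, 0 ≤ A i j)
    {S : Finset (Fin n)} {i j : Fin n} (hi : i ∈ S) (hj : j ∉ S) : A i j ≤ flowSum A S :=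
  calc A i j ≤ ∑ j ∈ Sᶜ, A i j := single_le_sum (fun j _ => hA i j) (mem_compl.2 hj)
    _ ≤ flowSum A S := single_le_sum (f := fun i => ∑ j ∈ Sᶜ, A i j)
        (fun i _ => sum_nonneg fun j _ => hA i j) hi

section Wof

variable {n : ℕ} {Ω : Type*} {R : ℕ → Fin n → Fin n → Ω → ℝ} {t : ℕ} {ω : Ω}

lemma Wof_nonneg (hR : ∀ i j, 0 ≤ R t i j ω) (i j : Fin n) : 0 ≤ Wof R t ω i j :=
  div_nonneg (hR i j) (sum_nonneg fun k _ => hR k j)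

lemma inv_le_Wof {i j : Fin n} (hR : ∀ k, R t k j ω = 0 ∨ R t k j ω = 1) (hij : R t i j ω = 1) :
    (n : ℝ)⁻¹ ≤ Wof R t ω i j := by
  have hR_nonneg : ∀ k, 0 ≤ R t k j ω := fun k => by rcases hR k with h | h <;> simp [h]
  have hone : 1 ≤ ∑ k, R t k j ω :=
    hij ▸ single_le_sum (fun k _ => hR_nonneg k) (mem_univ i)
  have hle : ∑ k, R t k j ω ≤ n :=
    calc ∑ k, R t k j ω ≤ ∑ _k : Fin n, (1 : ℝ) :=
          sum_le_sum fun k _ => by rcases hR k with h | h <;> simp [h]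
      _ = n := by simp
  simpa [Wof, hij] using inv_anti₀ (one_pos.trans_le hone) hle

end Wof

theorem random_model_DIFP_general
    {Ω : Type*} [MeasurableSpace Ω] (μ : MeasureTheory.Measure Ω)
    [MeasureTheory.IsProbabilityMeasure μ]
    {n : ℕ} (ε : ℝ) (hε : 0 < ε) (B : ℕ)
    (P : ℕ → Matrix (Fin n) (Fin n) ℝ)
    (hPeps : ∀ t i j, P t i j ≠ 0 → ε ≤ P t i j)
    (hPirr : ∀ t : ℕ, IrreducibleMat (∑ t' ∈ Finset.Ico (t * B) ((t + 1) * B), P t'))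
    (R : ℕ → Fin n → Fin n → Ω → ℝ)
    (hRmeas : ∀ t i j, Measurable (R t i j))
    (hR01 : ∀ t i j ω, R t i j ω = 0 ∨ R t i j ω = 1)
    (hRP : ∀ t i j, μ {ω | R t i j ω = 1} = ENNReal.ofReal (P t i j))
    (hindep : ProbabilityTheory.iIndepFun
      (m := fun _ : ℕ × Fin n × Fin n => Real.measurableSpace)
      (fun p ω => R p.1 p.2.1 p.2.2 ω) μ)
    :
    ∀ᵐ ω ∂μ, DirectedInfiniteFlow (fun t => Wof R t ω) := by
  have hR_nonneg : ∀ t i j ω, 0 ≤ R t i j ω := fun t i j ω => by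
    rcases hR01 t i j ω with h | h <;> simp [h]
  suffices hcut : ∀ S, NontrivialSubset S → ∀ᵐ ω ∂μ,
      Tendsto (fun T => ∑ t ∈ range T, flowSum (Wof R t ω) S) atTop atTop by
    refine ae_all_iff.2 fun S => ?_
    by_cases hS : NontrivialSubset S
    · exact (hcut S hS).mono fun _ h _ => h
    · exact ae_of_all _ fun _ h => absurd h hS
  intro S hS
  choose τ hτ i hi j hj hpos using fun m => (hPirr m).exists_pos_of_sum hS
  have hτ_mono : StrictMono τ := strictMono_nat_of_lt_succ fun m =>
    (mem_Ico.1 (hτ m)).2.trans_le (mem_Ico.1 (hτ (m + 1))).1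
  have hfreq : ∀ᵐ ω ∂μ, ∃ᶠ m in atTop, R (τ m) (i m) (j m) ω = 1 := by
    have hind : iIndepSet (fun m => {ω | R (τ m) (i m) (j m) ω = 1}) μ :=
      (hindep.precomp (g := fun m => (τ m, i m, j m))
        fun m m' h => hτ_mono.injective (congrArg Prod.fst h)).iIndepSet_preimage
        fun _ => measurableSet_singleton 1
    refine ae_frequently_mem_of_iIndepSet (fun m => hRmeas _ _ _ (measurableSet_singleton 1))
      hind (ENNReal.ofReal_pos.2 hε).ne' fun m => ?_
    exact (hRP _ _ _).symm ▸ ENNReal.ofReal_le_ofReal (hPeps _ _ _ (hpos m).ne')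
  have hn : (0 : ℝ) < n := Nat.cast_pos.2 hS.1.choose.pos
  filter_upwards [hfreq] with ω hω
  refine tendsto_sum_range_atTop_of_frequently_le
    (fun t => flowSum_nonneg (Wof_nonneg (hR_nonneg t · · ω)) S) (inv_pos.2 hn)
    (hτ_mono.tendsto_atTop.frequently (hω.mono fun m hm => ?_))
  exact (inv_le_Wof (fun k => hR01 _ k _ ω) hm).trans
    (le_flowSum (Wof_nonneg (hR_nonneg _ · · ω)) (hi m) (hj m))

/-- In the random model with B-irreducible probability matrices,
`{W(t)}` has the directed infinite flow property almost surely. -/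
theorem random_model_DIFP
    {Ω : Type*} [MeasurableSpace Ω] (μ : MeasureTheory.Measure Ω)
    [MeasureTheory.IsProbabilityMeasure μ]
    {n : ℕ} (hn : 2 ≤ n) (ε : ℝ) (hε : 0 < ε) (B : ℕ) (hB : 1 ≤ B)
    (P : ℕ → Matrix (Fin n) (Fin n) ℝ)
    (hP01 : ∀ t i j, P t i j ∈ Set.Icc (0:ℝ) 1)
    (hPdiag : ∀ t i, P t i i = 1)
    (hPeps : ∀ t i j, P t i j ≠ 0 → ε ≤ P t i j)
    (hPirr : ∀ t : ℕ, IrreducibleMat (∑ t' ∈ Finset.Ico (t * B) ((t + 1) * B), P t'))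
    (R : ℕ → Fin n → Fin n → Ω → ℝ)
    (hRmeas : ∀ t i j, Measurable (R t i j))
    (hR01 : ∀ t i j ω, R t i j ω = 0 ∨ R t i j ω = 1)
    (hRP : ∀ t i j, μ {ω | R t i j ω = 1} = ENNReal.ofReal (P t i j))
    (hindep : ProbabilityTheory.iIndepFun
      (m := fun _ : ℕ × Fin n × Fin n => Real.measurableSpace)
      (fun p ω => R p.1 p.2.1 p.2.2 ω) μ)
    :
    ∀ᵐ ω ∂μ, DirectedInfiniteFlow (fun t => Wof R t ω) :=
  random_model_DIFP_general μ ε hε B P hPeps hPirr R hRmeas hR01 hRP hindep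
end

section
/- In the random model with B-irreducible probability matrices, consider the push-sum iterates driven by {W(t)}. Then almost surely, for every t ≥ 0 there exists t' ≥ t such that y_i(t') ≥ 1/n^{nB} for all i ∈ [n]. -/
/-
Almost surely, infinitely many windows `[m n B, (m + 1) n B)` realise every edge with
`P_ij(t) ≠ 0`: these events are independent (they involve disjoint sets of the `R_ij(t)`) and each
has probability at least `ε ^ (n B n²)`, so the second Borel–Cantelli lemma applies.
Every nonzero entry of `W(t)` is at least `1/n`, and on such a window `W_ij(t) > 0` wherever
`P_ij(t) ≠ 0`. Since `∑ y(t) = n`, some `y_j` is at least `1` at the start of the window. After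
`q` blocks of length `B`, let `S` be the set of nodes carrying mass at least `n^{-qB}`;
irreducibility of the next block gives an edge leaving `S`, so `S` gains a node per block and is
all of `[n]` after `n` blocks.
-/

open Finset MeasureTheory

open Filter Function ProbabilityTheory

theorem Relation.ReflTransGen.exists_rel_of_mem_of_notMem {α : Type*} {r : α → α → Prop}
    {S : Set α} {a b : α} (h : Relation.ReflTransGen r a b) (ha : a ∈ S) (hb : b ∉ S) :
    ∃ u ∈ S, ∃ v ∉ S, r u v := by
  induction h with
  | refl => exact absurd ha hb
  | @tail c d _ hcd ih =>
    by_cases hc : c ∈ S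
    · exact ⟨c, hc, d, hb, hcd⟩
    · exact ih hc

theorem IrreducibleMat.exists_pos_apply {n : ℕ} {A : Matrix (Fin n) (Fin n) ℝ}
    (hA : IrreducibleMat A) {S : Finset (Fin n)} (hS : NontrivialSubset S) :
    ∃ u ∈ S, ∃ v ∉ S, 0 < A v u := by
  obtain ⟨⟨a, ha⟩, hSU⟩ := hS
  obtain ⟨b, -, hb⟩ := exists_of_ssubset (ssubset_univ_iff.2 hSU)
  exact (hA a b).exists_rel_of_mem_of_notMem (S := (S : Set (Fin n))) ha hb

section PushSum

variable {n : ℕ} {W : ℕ → Matrix (Fin n) (Fin n) ℝ} {u : Fin n → ℝ}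

theorem pushIter_succ_apply (t : ℕ) (i : Fin n) :
    pushIter W u (t + 1) i = ∑ j, W t i j * pushIter W u t j :=
  rfl

theorem pushIter_nonneg (hW : ∀ t i j, 0 ≤ W t i j) (hu : ∀ i, 0 ≤ u i) (t : ℕ) (i : Fin n) :
    0 ≤ pushIter W u t i := by
  induction t generalizing i with
  | zero => exact hu i
  | succ t ih =>
    rw [pushIter_succ_apply]
    exact sum_nonneg fun j _ => mul_nonneg (hW t i j) (ih j)

theorem sum_pushIter (hW : ∀ t j, ∑ i, W t i j = 1) (t : ℕ) :
    ∑ i, pushIter W u t i = ∑ i, u i := by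
  induction t with
  | zero => rfl
  | succ t ih =>
    simp only [pushIter_succ_apply]
    rw [sum_comm]
    simp only [← sum_mul, hW, one_mul, ih]

theorem exists_one_le_pushIter_one [NeZero n] (hW : ∀ t j, ∑ i, W t i j = 1) (t : ℕ) :
    ∃ j, 1 ≤ pushIter W (fun _ => 1) t j := by
  refine (exists_le_of_sum_le univ_nonempty ?_).imp fun j ⟨_, hj⟩ => hj
  rw [sum_pushIter hW]

theorem mul_le_pushIter_succ (hW : ∀ t i j, 0 ≤ W t i j) (hu : ∀ i, 0 ≤ u i) {γ c : ℝ}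
    (hγ : 0 ≤ γ) {t : ℕ} {i k : Fin n} (hWik : γ ≤ W t i k) (hc : c ≤ pushIter W u t k) :
    γ * c ≤ pushIter W u (t + 1) i := by
  have hy := pushIter_nonneg hW hu t
  calc γ * c ≤ γ * pushIter W u t k := mul_le_mul_of_nonneg_left hc hγ
    _ ≤ W t i k * pushIter W u t k := mul_le_mul_of_nonneg_right hWik (hy k)
    _ ≤ ∑ j, W t i j * pushIter W u t j :=
      single_le_sum (fun j _ => mul_nonneg (hW t i j) (hy j)) (mem_univ k)

theorem pow_mul_le_pushIter_add (hW : ∀ t i j, 0 ≤ W t i j) (hu : ∀ i, 0 ≤ u i) {γ c : ℝ}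
    (hγ : 0 ≤ γ) {k : Fin n} (hdiag : ∀ t, γ ≤ W t k k) {s : ℕ} (hc : c ≤ pushIter W u s k)
    (d : ℕ) : γ ^ d * c ≤ pushIter W u (s + d) k := by
  induction d with
  | zero => simpa using hc
  | succ d ih =>
    rw [pow_succ', mul_assoc]
    exact mul_le_pushIter_succ hW hu hγ (hdiag _) ih

theorem pow_mul_le_pushIter_of_edge (hW : ∀ t i j, 0 ≤ W t i j) (hu : ∀ i, 0 ≤ u i) {γ c : ℝ}
    (hγ : 0 ≤ γ) (hdiag : ∀ t k, γ ≤ W t k k) {s B t : ℕ} (ht : t ∈ Ico s (s + B))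
    {k v : Fin n} (hWvk : γ ≤ W t v k) (hc : c ≤ pushIter W u s k) :
    γ ^ B * c ≤ pushIter W u (s + B) v := by
  obtain ⟨hst, hts⟩ := mem_Ico.1 ht
  obtain ⟨e, rfl⟩ := Nat.exists_eq_add_of_le hst
  obtain ⟨f, rfl⟩ := Nat.exists_eq_add_of_lt (Nat.lt_of_add_lt_add_left hts)
  have hcross := mul_le_pushIter_succ hW hu hγ hWvk
    (pow_mul_le_pushIter_add hW hu hγ (hdiag · k) hc e)
  have := pow_mul_le_pushIter_add hW hu hγ (hdiag · v) hcross f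
  calc γ ^ (e + f + 1) * c = γ ^ f * (γ * (γ ^ e * c)) := by ring
    _ ≤ pushIter W u (s + (e + f + 1)) v := by
      rwa [show s + (e + f + 1) = s + e + 1 + f by ring]

theorem exists_notMem_pow_mul_le_pushIter (hW : ∀ t i j, 0 ≤ W t i j) (hu : ∀ i, 0 ≤ u i)
    {γ c : ℝ} (hγ : 0 ≤ γ) (hdiag : ∀ t k, γ ≤ W t k k) {A : ℕ → Matrix (Fin n) (Fin n) ℝ}
    {s B : ℕ} (hA : IrreducibleMat (∑ t ∈ Ico s (s + B), A t))
    (hAW : ∀ t ∈ Ico s (s + B), ∀ i j, A t i j ≠ 0 → γ ≤ W t i j)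
    {S : Finset (Fin n)} (hS : NontrivialSubset S) (hc : ∀ k ∈ S, c ≤ pushIter W u s k) :
    ∃ v ∉ S, ∀ k ∈ insert v S, γ ^ B * c ≤ pushIter W u (s + B) k := by
  obtain ⟨k, hkS, v, hvS, hpos⟩ := hA.exists_pos_apply hS
  rw [Matrix.sum_apply] at hpos
  obtain ⟨t, ht, hAt⟩ := exists_lt_of_sum_lt (hpos.trans_eq' sum_const_zero.symm)
  refine ⟨v, hvS, fun i hi => ?_⟩
  rcases mem_insert.1 hi with rfl | hiS
  · exact pow_mul_le_pushIter_of_edge hW hu hγ hdiag ht (hAW t ht i k hAt.ne') (hc k hkS)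
  · exact pow_mul_le_pushIter_add hW hu hγ (hdiag · i) (hc i hiS) B

theorem pow_mul_le_pushIter_of_irreducible_blocks (hW : ∀ t i j, 0 ≤ W t i j)
    (hu : ∀ i, 0 ≤ u i) {γ c : ℝ} (hγ : 0 ≤ γ) (hdiag : ∀ t k, γ ≤ W t k k)
    {A : ℕ → Matrix (Fin n) (Fin n) ℝ} {a B : ℕ}
    (hA : ∀ q < n, IrreducibleMat (∑ t ∈ Ico (a + q * B) (a + q * B + B), A t))
    (hAW : ∀ t ∈ Ico a (a + n * B), ∀ i j, A t i j ≠ 0 → γ ≤ W t i j)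
    {j : Fin n} (hc : c ≤ pushIter W u a j) (i : Fin n) :
    γ ^ (n * B) * c ≤ pushIter W u (a + n * B) i := by
  suffices ∀ q ≤ n, ∃ S : Finset (Fin n), min (q + 1) n ≤ #S ∧
      ∀ k ∈ S, γ ^ (q * B) * c ≤ pushIter W u (a + q * B) k by
    obtain ⟨S, hcard, hS⟩ := this n le_rfl
    have hSU : S = univ :=
      eq_univ_of_card S (le_antisymm (card_le_univ S) (by simpa using hcard))
    exact hS i (hSU ▸ mem_univ i)
  intro q hq
  induction q with
  | zero => exact ⟨{j}, by simp, by simpa using hc⟩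
  | succ q ih =>
    obtain ⟨S, hcard, hS⟩ := ih (by omega)
    have hpow : γ ^ ((q + 1) * B) = γ ^ B * γ ^ (q * B) := by ring
    have htime : a + (q + 1) * B = a + q * B + B := by ring
    rw [hpow, htime]
    by_cases hSU : S = univ
    · refine ⟨univ, by simp, fun k _ => ?_⟩
      rw [mul_assoc]
      exact pow_mul_le_pushIter_add hW hu hγ (hdiag · k) (hS k (hSU ▸ mem_univ k)) B
    · have hSne : S.Nonempty := card_pos.1 (by have := j.pos; omega)
      have hAW' : ∀ t ∈ Ico (a + q * B) (a + q * B + B), ∀ i j, A t i j ≠ 0 →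
          γ ≤ W t i j :=
        fun t ht => hAW t (Ico_subset_Ico (by omega) (by nlinarith) ht)
      obtain ⟨v, hvS, hv⟩ :=
        exists_notMem_pow_mul_le_pushIter hW hu hγ hdiag (hA q (by omega)) hAW' ⟨hSne, hSU⟩ hS
      refine ⟨insert v S, ?_, fun k hk => by rw [mul_assoc]; exact hv k hk⟩
      rw [card_insert_of_notMem hvS]
      omega

theorem one_div_pow_le_pushIter_one (hn : 0 < n) (hW : ∀ t, ColStochastic (W t))
    (hdiag : ∀ t k, 1 / (n : ℝ) ≤ W t k k) {A : ℕ → Matrix (Fin n) (Fin n) ℝ} {a B : ℕ}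
    (hA : ∀ q < n, IrreducibleMat (∑ t ∈ Ico (a + q * B) (a + q * B + B), A t))
    (hAW : ∀ t ∈ Ico a (a + n * B), ∀ i j, A t i j ≠ 0 → 1 / (n : ℝ) ≤ W t i j) (i : Fin n) :
    1 / (n : ℝ) ^ (n * B) ≤ pushIter W (fun _ => 1) (a + n * B) i := by
  have : NeZero n := ⟨hn.ne'⟩
  obtain ⟨j, hj⟩ := exists_one_le_pushIter_one (fun t => (hW t).2) a
  have := pow_mul_le_pushIter_of_irreducible_blocks (fun t => (hW t).1)
    (fun _ => zero_le_one) (by positivity) hdiag hA hAW hj i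
  rwa [mul_one, one_div_pow] at this

end PushSum

section RandomMatrix

variable {n : ℕ} {Ω : Type*} {R : ℕ → Fin n → Fin n → Ω → ℝ} {t : ℕ} {ω : Ω}

theorem sum_mem_Icc_of_forall_eq_zero_or_one {x : Fin n → ℝ} (hx : ∀ k, x k = 0 ∨ x k = 1)
    {j : Fin n} (hj : x j = 1) : ∑ k, x k ∈ Set.Icc 1 (n : ℝ) := by
  have hx0 : ∀ k, 0 ≤ x k := fun k => by rcases hx k with h | h <;> simp [h]
  have hx1 : ∀ k, x k ≤ 1 := fun k => by rcases hx k with h | h <;> simp [h]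
  refine ⟨hj ▸ single_le_sum (fun k _ => hx0 k) (mem_univ j), ?_⟩
  simpa using sum_le_sum fun k (_ : k ∈ univ) => hx1 k

theorem colStochastic_Wof (h01 : ∀ i j, R t i j ω = 0 ∨ R t i j ω = 1)
    (hdiag : ∀ j, R t j j ω = 1) : ColStochastic (Wof R t ω) := by
  have hsum : ∀ j, 0 < ∑ k, R t k j ω := fun j =>
    zero_lt_one.trans_le (sum_mem_Icc_of_forall_eq_zero_or_one (h01 · j) (hdiag j)).1
  refine ⟨fun i j => div_nonneg ?_ (hsum j).le, fun j => ?_⟩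
  · rcases h01 i j with h | h <;> simp [h]
  · simp only [Wof, ← sum_div]
    exact div_self (hsum j).ne'

theorem one_div_le_Wof (h01 : ∀ i j, R t i j ω = 0 ∨ R t i j ω = 1)
    (hdiag : ∀ j, R t j j ω = 1) {i j : Fin n} (hij : R t i j ω = 1) :
    1 / (n : ℝ) ≤ Wof R t ω i j := by
  obtain ⟨hlo, hhi⟩ := sum_mem_Icc_of_forall_eq_zero_or_one (h01 · j) (hdiag j)
  rw [Wof, hij]
  exact one_div_le_one_div_of_le (zero_lt_one.trans_le hlo) hhi

end RandomMatrix

section BorelCantelli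

variable {Ω ι κ : Type*} [MeasurableSpace Ω] {μ : Measure Ω} {A : ι → Set Ω}

theorem ProbabilityTheory.iIndepSet.biInter_of_pairwise_disjoint
    (hA : ∀ i, MeasurableSet (A i)) (h : iIndepSet A μ) {T : κ → Finset ι}
    (hT : Pairwise (Disjoint on T)) : iIndepSet (fun m => ⋂ i ∈ T m, A i) μ := by
  rw [iIndepSet_iff_meas_biInter fun m => (T m).measurableSet_biInter fun i _ => hA i]
  classical
  intro M
  rw [← set_biInter_biUnion, h.meas_biInter, prod_biUnion (hT.set_pairwise _)]
  exact prod_congr rfl fun m _ => (h.meas_biInter _).symm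

theorem ProbabilityTheory.iIndepSet.ae_frequently_forall_mem
    (hA : ∀ i, MeasurableSet (A i)) (h : iIndepSet A μ) {T : ℕ → Finset ι}
    (hT : Pairwise (Disjoint on T)) {K : ℕ} (hK : ∀ m, #(T m) ≤ K) {δ : ENNReal} (hδ0 : δ ≠ 0)
    (hδ1 : δ ≤ 1) (hAδ : ∀ m, ∀ i ∈ T m, δ ≤ μ (A i)) :
    ∀ᵐ ω ∂μ, ∃ᶠ m in atTop, ∀ i ∈ T m, ω ∈ A i := by
  have hE : ∀ m, MeasurableSet (⋂ i ∈ T m, A i) := fun m =>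
    (T m).measurableSet_biInter fun i _ => hA i
  have hlow : ∀ m, δ ^ K ≤ μ (⋂ i ∈ T m, A i) := fun m =>
    calc δ ^ K ≤ δ ^ #(T m) := pow_le_pow_right_of_le_one' hδ1 (hK m)
      _ = ∏ _i ∈ T m, δ := (prod_const δ).symm
      _ ≤ ∏ i ∈ T m, μ (A i) := prod_le_prod' (hAδ m)
      _ = μ (⋂ i ∈ T m, A i) := (h.meas_biInter _).symm
  have hsum : ∑' m, μ (⋂ i ∈ T m, A i) = ⊤ :=
    top_unique <| (ENNReal.tsum_const_eq_top_of_ne_zero (pow_ne_zero K hδ0)).symm.le.trans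
      (ENNReal.tsum_le_tsum hlow)
  have hlim := measure_limsup_eq_one hE (h.biInter_of_pairwise_disjoint hA hT) hsum
  have : IsProbabilityMeasure μ := h.isProbabilityMeasure
  filter_upwards [(mem_ae_iff_prob_eq_one (MeasurableSet.measurableSet_limsup hE)).2 hlim]
    with ω hω
  simpa only [mem_limsup_iff_frequently_mem, Set.mem_iInter₂] using hω

end BorelCantelli

section Windows

variable {n : ℕ} (P : ℕ → Matrix (Fin n) (Fin n) ℝ) (L : ℕ)

noncomputable def windowSupport (m : ℕ) : Finset (ℕ × Fin n × Fin n) :=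
  {p ∈ Ico (m * L) (m * L + L) ×ˢ univ | P p.1 p.2.1 p.2.2 ≠ 0}

variable {P L}

theorem mem_windowSupport {m : ℕ} {p : ℕ × Fin n × Fin n} :
    p ∈ windowSupport P L m ↔ p.1 ∈ Ico (m * L) (m * L + L) ∧ P p.1 p.2.1 p.2.2 ≠ 0 := by
  simp [windowSupport]

theorem pairwise_disjoint_windowSupport : Pairwise (Disjoint on windowSupport P L) := by
  intro m m' hne
  refine disjoint_left.2 fun p hp hp' => hne ?_
  obtain ⟨hm, -⟩ := mem_windowSupport.1 hp
  obtain ⟨hm', -⟩ := mem_windowSupport.1 hp'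
  rw [mem_Ico] at hm hm'
  have h₁ : m < m' + 1 := Nat.lt_of_mul_lt_mul_right (a := L) (by rw [Nat.succ_mul]; omega)
  have h₂ : m' < m + 1 := Nat.lt_of_mul_lt_mul_right (a := L) (by rw [Nat.succ_mul]; omega)
  omega

theorem card_windowSupport_le (m : ℕ) : #(windowSupport P L m) ≤ L * (n * n) := by
  calc #(windowSupport P L m)
      ≤ #(Ico (m * L) (m * L + L) ×ˢ (univ : Finset (Fin n × Fin n))) := card_filter_le _ _
    _ = L * (n * n) := by simp

end Windows

theorem random_model_y_lower_bound_general
    {Ω : Type*} [MeasurableSpace Ω] (μ : MeasureTheory.Measure Ω)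
    [MeasureTheory.IsProbabilityMeasure μ]
    {n : ℕ} (hn : 2 ≤ n) (ε : ℝ) (hε : 0 < ε) (B : ℕ) (hB : 1 ≤ B)
    (P : ℕ → Matrix (Fin n) (Fin n) ℝ)
    (hPdiag : ∀ t i, P t i i = 1)
    (hPeps : ∀ t i j, P t i j ≠ 0 → ε ≤ P t i j)
    (hPirr : ∀ t : ℕ, IrreducibleMat (∑ t' ∈ Finset.Ico (t * B) ((t + 1) * B), P t'))
    (R : ℕ → Fin n → Fin n → Ω → ℝ)
    (hRmeas : ∀ t i j, Measurable (R t i j))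
    (hR01 : ∀ t i j ω, R t i j ω = 0 ∨ R t i j ω = 1)
    (hRP : ∀ t i j, μ {ω | R t i j ω = 1} = ENNReal.ofReal (P t i j))
    (hindep : ProbabilityTheory.iIndepFun
      (m := fun _ : ℕ × Fin n × Fin n => Real.measurableSpace)
      (fun p ω => R p.1 p.2.1 p.2.2 ω) μ)
    :
    ∀ᵐ ω ∂μ, ∀ t : ℕ, ∃ t', t ≤ t' ∧
      ∀ i, (1 : ℝ) / (n : ℝ) ^ (n * B) ≤
        pushIter (fun s => Wof R s ω) (fun _ => 1) t' i := by
  let A : ℕ × Fin n × Fin n → Set Ω := fun p => {ω | R p.1 p.2.1 p.2.2 ω = 1}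
  have hA : ∀ p, MeasurableSet (A p) := fun p => hRmeas _ _ _ (measurableSet_singleton 1)
  have hAind : iIndepSet A μ := (iIndepSet_iff_meas_biInter hA).2 fun S =>
    hindep.measure_inter_preimage_eq_mul S fun _ _ => measurableSet_singleton 1
  have hε1 : ε ≤ 1 := hPdiag 0 ⟨0, by omega⟩ ▸ hPeps 0 _ _ (by rw [hPdiag]; exact one_ne_zero)
  have hwindows : ∀ᵐ ω ∂μ, ∃ᶠ m in atTop, ∀ p ∈ windowSupport P (n * B) m, ω ∈ A p :=
    hAind.ae_frequently_forall_mem hA pairwise_disjoint_windowSupport card_windowSupport_le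
      (ENNReal.ofReal_pos.2 hε).ne' (ENNReal.ofReal_le_one.2 hε1) fun m p hp =>
        (hRP _ _ _).symm ▸ ENNReal.ofReal_le_ofReal (hPeps _ _ _ (mem_windowSupport.1 hp).2)
  have hdiag : ∀ᵐ ω ∂μ, ∀ t j, R t j j ω = 1 := ae_all_iff.2 fun t => ae_all_iff.2 fun j =>
    (mem_ae_iff_prob_eq_one (hA (t, j, j))).2 (by simp [A, hRP, hPdiag])
  filter_upwards [hwindows, hdiag] with ω hω hdiagω t
  obtain ⟨m, hm, htm⟩ := (hω.and_eventually (eventually_ge_atTop t)).exists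
  have hblocks : ∀ q < n, IrreducibleMat
      (∑ s ∈ Ico (m * (n * B) + q * B) (m * (n * B) + q * B + B), P s) := fun q _ => by
    convert hPirr (m * n + q) using 3 <;> ring
  have hedges : ∀ s ∈ Ico (m * (n * B)) (m * (n * B) + n * B), ∀ i j, P s i j ≠ 0 →
      1 / (n : ℝ) ≤ Wof R s ω i j := fun s hs i j hP =>
    one_div_le_Wof (hR01 s · · ω) (hdiagω s) (hm (s, i, j) (mem_windowSupport.2 ⟨hs, hP⟩))
  refine ⟨m * (n * B) + n * B, ?_, one_div_pow_le_pushIter_one (by omega)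
    (fun s => colStochastic_Wof (hR01 s · · ω) (hdiagω s))
    (fun s k => one_div_le_Wof (hR01 s · · ω) (hdiagω s) (hdiagω s k)) hblocks hedges⟩
  have : m ≤ m * (n * B) := Nat.le_mul_of_pos_right m (Nat.mul_pos (by omega) hB)
  omega

/-- In the random model, almost surely, for every `t` there is
`t' ≥ t` with `y_i(t') ≥ 1/n^{nB}` for all `i`. -/
theorem random_model_y_lower_bound
    {Ω : Type*} [MeasurableSpace Ω] (μ : MeasureTheory.Measure Ω)
    [MeasureTheory.IsProbabilityMeasure μ]
    {n : ℕ} (hn : 2 ≤ n) (ε : ℝ) (hε : 0 < ε) (B : ℕ) (hB : 1 ≤ B)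
    (P : ℕ → Matrix (Fin n) (Fin n) ℝ)
    (hP01 : ∀ t i j, P t i j ∈ Set.Icc (0:ℝ) 1)
    (hPdiag : ∀ t i, P t i i = 1)
    (hPeps : ∀ t i j, P t i j ≠ 0 → ε ≤ P t i j)
    (hPirr : ∀ t : ℕ, IrreducibleMat (∑ t' ∈ Finset.Ico (t * B) ((t + 1) * B), P t'))
    (R : ℕ → Fin n → Fin n → Ω → ℝ)
    (hRmeas : ∀ t i j, Measurable (R t i j))
    (hR01 : ∀ t i j ω, R t i j ω = 0 ∨ R t i j ω = 1)
    (hRP : ∀ t i j, μ {ω | R t i j ω = 1} = ENNReal.ofReal (P t i j))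
    (hindep : ProbabilityTheory.iIndepFun
      (m := fun _ : ℕ × Fin n × Fin n => Real.measurableSpace)
      (fun p ω => R p.1 p.2.1 p.2.2 ω) μ)
    :
    ∀ᵐ ω ∂μ, ∀ t : ℕ, ∃ t', t ≤ t' ∧
      ∀ i, (1 : ℝ) / (n : ℝ) ^ (n * B) ≤
        pushIter (fun s => Wof R s ω) (fun _ => 1) t' i :=
  random_model_y_lower_bound_general μ hn ε hε B hB P hPdiag hPeps hPirr R hRmeas hR01 hRP hindep
end
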